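/- arXiv:1609.08184 — 3 statements merged into one kernel-verified Lean document; each statement's English description precedes it below -/
import Mathlib

section
/- Let v = (v0, v1, v2) and u = (r, c, d) be triples of real numbers. The set of (α, β) with α > 0 satisfying ν_{α,β}(v) = ν_{α,β}(u) (where both denominators are nonzero) is contained in the solution set of x·α² + x·β² + y·β + z = 0, where x = v0·c - v1·r, y = 2(v2·r - v0·d), and z = 2(v1·d - v2·c). In particular, if x ≠ 0 it is part of a circle with center on the β-axis, and if x = 0 and (y,z) ≠ (0,0) it is part of a vertical line. -/
/-- The tilt slope for a triple `(c0, c1, c2)` of real numbers. -/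
noncomputable def tiltSlope (α β c0 c1 c2 : ℝ) : ℝ :=
  (c2 - β * c1 + β ^ 2 / 2 * c0 - α ^ 2 / 2 * c0) / (c1 - β * c0)

/-- A numerical wall `ν_{α,β}(v) = ν_{α,β}(u)` is contained in the solution set of
`x α² + x β² + y β + z = 0` with `x = v0 c - v1 r`, `y = 2(v2 r - v0 d)`, `z = 2(v1 d - v2 c)`;
in particular it is part of a circle with center on the β-axis when `x ≠ 0`, and part of a
vertical line when `x = 0` and `(y, z) ≠ (0, 0)`. -/
theorem stmt2 (v0 v1 v2 r c d : ℝ) :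
    let x := v0 * c - v1 * r
    let y := 2 * (v2 * r - v0 * d)
    let z := 2 * (v1 * d - v2 * c)
    let W : Set (ℝ × ℝ) := {p | 0 < p.1 ∧ (v1 - p.2 * v0) ≠ 0 ∧ (c - p.2 * r) ≠ 0 ∧
      tiltSlope p.1 p.2 v0 v1 v2 = tiltSlope p.1 p.2 r c d}
    (W ⊆ {p | x * p.1 ^ 2 + x * p.2 ^ 2 + y * p.2 + z = 0}) ∧
    (x ≠ 0 → W ⊆ {p | p.1 ^ 2 + (p.2 + y / (2 * x)) ^ 2 = y ^ 2 / (4 * x ^ 2) - z / x}) ∧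
    (x = 0 → y ≠ 0 → W ⊆ {p | p.2 = -z / y}) ∧
    (x = 0 → y = 0 → z ≠ 0 → W = ∅) := by
  intro x y z W
  have key : W ⊆ {p | x * p.1 ^ 2 + x * p.2 ^ 2 + y * p.2 + z = 0} := by
    rintro ⟨a, b⟩ ⟨ha, h1, h2, heq⟩
    simp only [tiltSlope] at heq
    rw [div_eq_div_iff h1 h2] at heq
    show x * a ^ 2 + x * b ^ 2 + y * b + z = 0
    simp only [x, y, z]
    nlinarith [heq]
  refine ⟨key, ?_, ?_, ?_⟩
  · intro hx p hp
    have h := key hp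
    simp only [Set.mem_setOf_eq] at h ⊢
    field_simp
    linear_combination (16 * x) * h
  · intro hx hy p hp
    have h := key hp
    simp only [Set.mem_setOf_eq] at h ⊢
    rw [hx] at h
    field_simp
    linarith
  · intro hx hy hz
    ext p
    simp only [Set.mem_empty_iff_false, iff_false]
    intro hp
    have h := key hp
    simp only [Set.mem_setOf_eq, hx, hy] at h
    simp at h
    exact hz h
end

section
/- If two numerical walls for a fixed class v = (v0,v1,v2) ∈ ℝ³, given by classes u = (r,c,d) and u' = (r',c',d'), intersect at a point (α, β) with α > 0 (i.e. ν_{α,β}(v) = ν_{α,β}(u) = ν_{α,β}(u') with all denominators nonzero), then the vectors v, u, u' ∈ ℝ³ are linearly dependent. -/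
lemma tiltSlope_key (α β a0 a1 a2 s : ℝ) (hden : a1 - β * a0 ≠ 0)
    (h : tiltSlope α β a0 a1 a2 = s) :
    (β ^ 2 / 2 - α ^ 2 / 2 + s * β) * a0 - (β + s) * a1 + a2 = 0 := by
  unfold tiltSlope at h
  rw [div_eq_iff hden] at h
  nlinarith [h]

/-- If two numerical walls for a fixed class `v` given by classes `u` and `u'` intersect at a
point `(α, β)` with `α > 0` (all denominators being nonzero), then `v`, `u`, `u'` are linearly
dependent in `ℝ³`. -/
theorem stmt3 (v u u' : Fin 3 → ℝ) (α β : ℝ) (hα : 0 < α)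
    (hv : v 1 - β * v 0 ≠ 0) (hu : u 1 - β * u 0 ≠ 0) (hu' : u' 1 - β * u' 0 ≠ 0)
    (h1 : tiltSlope α β (v 0) (v 1) (v 2) = tiltSlope α β (u 0) (u 1) (u 2))
    (h2 : tiltSlope α β (v 0) (v 1) (v 2) = tiltSlope α β (u' 0) (u' 1) (u' 2)) :
    ¬ LinearIndependent ℝ ![v, u, u'] := by
  intro hli
  set s : ℝ := tiltSlope α β (v 0) (v 1) (v 2) with hs
  set L : (Fin 3 → ℝ) →ₗ[ℝ] ℝ :=
    (β ^ 2 / 2 - α ^ 2 / 2 + s * β) • LinearMap.proj 0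
      - (β + s) • LinearMap.proj 1 + LinearMap.proj 2 with hL
  have hLapp : ∀ w : Fin 3 → ℝ,
      L w = (β ^ 2 / 2 - α ^ 2 / 2 + s * β) * w 0 - (β + s) * w 1 + w 2 := by
    intro w
    simp [hL]
  have hLv : L v = 0 := by rw [hLapp]; exact tiltSlope_key α β _ _ _ s hv rfl
  have hLu : L u = 0 := by rw [hLapp]; exact tiltSlope_key α β _ _ _ s hu h1.symm
  have hLu' : L u' = 0 := by rw [hLapp]; exact tiltSlope_key α β _ _ _ s hu' h2.symm
  have hcard : Fintype.card (Fin 3) = Module.finrank ℝ (Fin 3 → ℝ) := by simp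
  let b := basisOfLinearIndependentOfCardEqFinrank hli hcard
  have hb : ⇑b = ![v, u, u'] := coe_basisOfLinearIndependentOfCardEqFinrank hli hcard
  have hL0 : L = 0 := by
    apply b.ext
    intro i
    rw [hb]
    fin_cases i
    · simpa using hLv
    · simpa using hLu
    · simpa using hLu'
  have h0 : L (Pi.single 2 1) = 0 := by rw [hL0]; rfl
  rw [hLapp] at h0
  simp [Pi.single_apply] at h0
end

section
/- For v = (v0, v1, v2) ∈ ℝ³, every semicircular numerical wall {x·α² + x·β² + y·β + z = 0, α > 0} with x = v0·c - v1·r ≠ 0, y = 2(v2·r - v0·d), z = 2(v1·d - v2·c) intersects the curve {ν_{α,β}(v) = 0} at the point where α is maximal on the wall (the top point of the semicircle). -/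
/-- Every semicircular numerical wall for `v = (v0, v1, v2)` intersects the curve
`ν_{α,β}(v) = 0` at its top point, i.e. at the point of the wall where `α` is maximal. -/
theorem stmt4 (v0 v1 v2 r c d : ℝ)
    (x y z : ℝ) (hx : x = v0 * c - v1 * r) (hy : y = 2 * (v2 * r - v0 * d))
    (hz : z = 2 * (v1 * d - v2 * c)) (hx0 : x ≠ 0)
    (hr : 0 < y ^ 2 / (4 * x ^ 2) - z / x) :
    let β₀ : ℝ := -y / (2 * x)
    let α₀ : ℝ := Real.sqrt (y ^ 2 / (4 * x ^ 2) - z / x)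
    0 < α₀ ∧
    x * α₀ ^ 2 + x * β₀ ^ 2 + y * β₀ + z = 0 ∧
    v2 - β₀ * v1 + β₀ ^ 2 / 2 * v0 - α₀ ^ 2 / 2 * v0 = 0 ∧
    ∀ α β : ℝ, 0 < α → x * α ^ 2 + x * β ^ 2 + y * β + z = 0 → α ≤ α₀ := by
  intro β₀ α₀
  have hα₀sq : α₀ ^ 2 = y ^ 2 / (4 * x ^ 2) - z / x := Real.sq_sqrt hr.le
  have hα₀nn : 0 ≤ α₀ := Real.sqrt_nonneg _
  refine ⟨Real.sqrt_pos.mpr hr, ?_, ?_, ?_⟩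
  · show x * α₀ ^ 2 + x * (-y / (2 * x)) ^ 2 + y * (-y / (2 * x)) + z = 0
    rw [hα₀sq]; field_simp; ring
  · show v2 - (-y / (2 * x)) * v1 + (-y / (2 * x)) ^ 2 / 2 * v0 - α₀ ^ 2 / 2 * v0 = 0
    rw [hα₀sq]; field_simp; subst hx hy hz; ring
  · intro α β hα hwall
    have key : α ^ 2 + (β + y / (2 * x)) ^ 2 = α₀ ^ 2 := by
      rw [hα₀sq]
      field_simp
      linear_combination (16 * x) * hwall
    nlinarith [sq_nonneg (β + y / (2 * x)), key, hα₀nn, hα]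
end
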